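/- Let (Ω,F,P) be a probability space, p ∈ (0,1), D : Ω → ℝ taking values in {0,1} with P(D = 1) = p, and γ, T : Ω → ℕ with T ≤ γ pointwise. Define D̄*(ω) = T(ω)/γ(ω) if γ(ω) > 0 and D̄*(ω) = 0 otherwise, and let p_γ := P(γ > 0) with 0 < p_γ < 1. Assume D is independent of (γ, T), E[D̄* | σ(γ)] = p·1{γ > 0} almost surely, E[(D̄*)² | σ(γ)] = (p² + p(1−p)/γ)·1{γ > 0} almost surely, and (1/γ)·1{γ > 0} is integrable. Let θ⁰⁰, μᵈᵉ, λˢᵉ : ℕ → ℝ and ε : Ω → ℝ be such that Y := θ⁰⁰(γ) + μᵈᵉ(γ)·D + λˢᵉ(γ)·T + ε with all terms integrable, E[ε] = 0, E[ε·D̄*] = 0, and λˢᵉ(γ)·γ·D̄*·(D̄* − p·p_γ) integrable with E[D̄*·(D̄* − p·p_γ)·1{γ>0}] ≠ 0. Then Cov(Y, D̄*)/Var(D̄*) = bias + E[ λˢᵉ(γ)·γ·D̄*·(D̄* − p·p_γ) | γ > 0 ] / E[ D̄*·(D̄* − p·p_γ) | γ > 0 ], where bias = (Δθ⁰⁰ +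 p·Δμᵈᵉ)·(1 − p_γ) / ( p(1 − p_γ) + (1 − p)·E[1/γ | γ > 0] ), Δθ⁰⁰ := E[θ⁰⁰(γ) | γ > 0] − E[θ⁰⁰(γ) | γ = 0], and Δμᵈᵉ := E[μᵈᵉ(γ) | γ > 0] − E[μᵈᵉ(γ) | γ = 0]. -/

import Mathlib

/-!
Given the degree γ, the imputed share `D̄*` has conditional mean `p·1{γ > 0}`. Pulling functions
of γ out of the conditional expectation gives
`Cov(f(γ), D̄*) = p·P(γ > 0)·P(γ = 0)·(E[f(γ) | γ > 0] − E[f(γ) | γ = 0])`: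
because isolated nodes get `D̄* = 0`, every degree-dependent part of the outcome covaries with
`D̄*`. Independence of `D` from `(γ, T)` turns the direct-effect term into `p·Cov(μᵈᵉ(γ), D̄*)`,
the spillover term is `E[λˢᵉ(γ)·γ·D̄*·(D̄* − E D̄*)]` since `T = γ·D̄*`, and the error term
drops out by its two moment conditions. The conditional second moment gives
`Var(D̄*) = p·p_γ·(p(1 − p_γ) + (1 − p)·E[1/γ | γ > 0])`, and dividing yields the formula.
-/

open MeasureTheory ProbabilityTheory
open scoped ENNReal

noncomputable def imputedShare (g t : ℕ) : ℝ := if 0 < g then t / g else 0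

theorem abs_imputedShare_le_one {g t : ℕ} (h : t ≤ g) : |imputedShare g t| ≤ 1 := by
  unfold imputedShare
  split_ifs with hg
  · rw [abs_of_nonneg (by positivity), div_le_one (by exact_mod_cast hg)]
    exact_mod_cast h
  · simp

theorem natCast_mul_imputedShare {g t : ℕ} (h : t ≤ g) : (g : ℝ) * imputedShare g t = t := by
  unfold imputedShare
  split_ifs with hg
  · field_simp
  · obtain rfl : t = 0 := by omega
    simp

theorem spillover_ratio_eq (p pγ a b c d I S : ℝ) (hp : p ≠ 0) (hpγ : pγ ≠ 0)
    (hpγ' : 1 - pγ ≠ 0) :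
    (p * ((1 - pγ) * a - pγ * b) + p * (p * ((1 - pγ) * c - pγ * d)) + S) /
        (p ^ 2 * pγ + p * (1 - p) * I - (p * pγ) ^ 2)
      = ((pγ⁻¹ * a - (1 - pγ)⁻¹ * b) + p * (pγ⁻¹ * c - (1 - pγ)⁻¹ * d)) * (1 - pγ) /
          (p * (1 - pγ) + (1 - p) * (pγ⁻¹ * I))
        + (pγ⁻¹ * S) / (pγ⁻¹ * (p ^ 2 * pγ + p * (1 - p) * I - (p * pγ) ^ 2)) := by
  -- the variance is `p·pγ` times the denominator of the bias
  have hK : p * (1 - pγ) + (1 - p) * (pγ⁻¹ * I)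
      = (p ^ 2 * pγ + p * (1 - p) * I - (p * pγ) ^ 2) / (p * pγ) := by
    field_simp
    ring
  rw [hK, div_div_eq_mul_div]
  field_simp

theorem setOf_eq_zero_eq_compl_setOf_pos {Ω : Type*} (γ : Ω → ℕ) :
    {ω | γ ω = 0} = {ω | 0 < γ ω}ᶜ := by
  ext ω
  simp [Nat.pos_iff_ne_zero]

section

variable {Ω : Type*} [MeasurableSpace Ω]

theorem integral_eq_measureReal_of_forall_eq_zero_or_eq_one {μ : Measure Ω} {D : Ω → ℝ}
    (hD : Measurable D) (hD01 : ∀ ω, D ω = 0 ∨ D ω = 1) :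
    ∫ ω, D ω ∂μ = μ.real {ω | D ω = 1} := by
  have hind : D = {ω | D ω = 1}.indicator 1 := by
    funext ω
    rcases hD01 ω with h | h <;> simp [h]
  calc ∫ ω, D ω ∂μ = ∫ ω, {ω | D ω = 1}.indicator 1 ω ∂μ := by rw [← hind]
    _ = μ.real {ω | D ω = 1} := integral_indicator_one (hD (measurableSet_singleton 1))

theorem integral_mul_sub_const {μ : Measure Ω} {X Z : Ω → ℝ} (hX : Integrable X μ)
    (hXZ : Integrable (fun ω => X ω * Z ω) μ) (c : ℝ) :
    ∫ ω, X ω * (Z ω - c) ∂μ = ∫ ω, X ω * Z ω ∂μ - c * ∫ ω, X ω ∂μ := by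
  simp_rw [mul_sub]
  rw [integral_sub hXZ (hX.mul_const c), integral_mul_const, mul_comm]

theorem setIntegral_mul_sub_eq_integral_sq_sub {μ : Measure Ω} {s : Set Ω} {X : Ω → ℝ}
    (hX : Integrable X μ) (hX2 : Integrable (fun ω => X ω ^ 2) μ) (hXs : ∀ ω ∉ s, X ω = 0)
    {c : ℝ} (hc : ∫ ω, X ω ∂μ = c) :
    ∫ ω in s, X ω * (X ω - c) ∂μ = ∫ ω, X ω ^ 2 ∂μ - c ^ 2 := by
  simp_rw [sq] at hX2 ⊢
  rw [setIntegral_eq_integral_of_forall_compl_eq_zero fun ω hω => by rw [hXs ω hω, zero_mul],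
    integral_mul_sub_const hX hX2, hc]

theorem integral_mul_comp_eq_of_indepFun {μ : Measure Ω} {β : Type*} [MeasurableSpace β]
    [Countable β] [MeasurableSingletonClass β] {D : Ω → ℝ} {Z : Ω → β} (hDZ : D ⟂ᵢ[μ] Z)
    (hD : Measurable D) (hZ : Measurable Z) (F : β → ℝ) :
    ∫ ω, D ω * F (Z ω) ∂μ = (∫ ω, D ω ∂μ) * ∫ ω, F (Z ω) ∂μ :=
  hDZ.integral_fun_comp_mul_comp (f := id) hD.aemeasurable hZ.aemeasurable
    aestronglyMeasurable_id (measurable_of_countable F).aestronglyMeasurable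

theorem integral_comp_mul_eq_of_condExp_comap_eq {β : Type*} [MeasurableSpace β]
    {μ : Measure Ω} [IsFiniteMeasure μ] {γ : Ω → β} (hγ : Measurable γ) {f g : β → ℝ}
    (hf : Measurable f) {X : Ω → ℝ} (hX : Integrable X μ)
    (hfX : Integrable (fun ω => f (γ ω) * X ω) μ)
    (hXg : μ[X | MeasurableSpace.comap γ inferInstance] =ᵐ[μ] fun ω => g (γ ω)) :
    ∫ ω, f (γ ω) * X ω ∂μ = ∫ ω, f (γ ω) * g (γ ω) ∂μ := by
  have hfγ : StronglyMeasurable[MeasurableSpace.comap γ inferInstance] (fun ω => f (γ ω)) :=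
    (hf.comp (Measurable.of_comap_le le_rfl)).stronglyMeasurable
  rw [← integral_condExp hγ.comap_le]
  refine integral_congr_ae ?_
  filter_upwards [condExp_mul_of_stronglyMeasurable_left hfγ hfX hX, hXg] with ω hfXω hXω
  rw [Pi.mul_apply, hXω] at hfXω
  exact hfXω

theorem memLp_top_of_eq_imputedShare {μ : Measure Ω} {γ T : Ω → ℕ} (hγ : Measurable γ)
    (hT : Measurable T) (hTγ : ∀ ω, T ω ≤ γ ω) {X : Ω → ℝ}
    (hX : ∀ ω, X ω = imputedShare (γ ω) (T ω)) : MemLp X ∞ μ := by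
  rw [funext hX]
  refine memLp_top_of_bound ?_ 1 (.of_forall fun ω => abs_imputedShare_le_one (hTγ ω))
  exact ((measurable_of_countable fun q : ℕ × ℕ => imputedShare q.1 q.2).comp
    (hγ.prodMk hT)).aestronglyMeasurable

theorem integral_mul_natCast_mul_sub_eq_setIntegral {μ : Measure Ω} {γ T : Ω → ℕ}
    (hTγ : ∀ ω, T ω ≤ γ ω) {X : Ω → ℝ} (hX : ∀ ω, X ω = imputedShare (γ ω) (T ω))
    (f : ℕ → ℝ) (c : ℝ) :
    ∫ ω, f (γ ω) * (T ω : ℝ) * (X ω - c) ∂μ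
      = ∫ ω in {ω | 0 < γ ω}, f (γ ω) * (γ ω : ℝ) * X ω * (X ω - c) ∂μ := by
  rw [setIntegral_eq_integral_of_forall_compl_eq_zero fun ω hω => by simp_all]
  congr with ω
  rw [hX, ← natCast_mul_imputedShare (hTγ ω)]
  ring

variable {P : Measure Ω} [IsProbabilityMeasure P] {γ : Ω → ℕ} {p : ℝ} {X : Ω → ℝ}

theorem integral_comp_mul_eq_mul_setIntegral (hγ : Measurable γ) (hX : Integrable X P)
    (hXγ : P[X | MeasurableSpace.comap γ inferInstance] =ᵐ[P] fun ω => if 0 < γ ω then p else 0)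
    (f : ℕ → ℝ) (hfX : Integrable (fun ω => f (γ ω) * X ω) P) :
    ∫ ω, f (γ ω) * X ω ∂P = p * ∫ ω in {ω | 0 < γ ω}, f (γ ω) ∂P := by
  rw [integral_comp_mul_eq_of_condExp_comap_eq (g := fun n => if 0 < n then p else 0) hγ
    (measurable_of_countable f) hX hfX hXγ, ← integral_const_mul,
    ← integral_indicator (measurableSet_lt measurable_const hγ)]
  refine integral_congr_ae (.of_forall fun ω => ?_)
  by_cases h : 0 < γ ω <;> simp [h, mul_comm]

theorem integral_eq_mul_measureReal_of_condExp_comap_eq (hγ : Measurable γ)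
    (hX : Integrable X P)
    (hXγ : P[X | MeasurableSpace.comap γ inferInstance] =ᵐ[P] fun ω => if 0 < γ ω then p else 0) :
    ∫ ω, X ω ∂P = p * P.real {ω | 0 < γ ω} := by
  simpa using integral_comp_mul_eq_mul_setIntegral hγ hX hXγ 1 (by simpa using hX)

theorem integral_comp_mul_sub_eq (hγ : Measurable γ) (hX : Integrable X P)
    (hXγ : P[X | MeasurableSpace.comap γ inferInstance] =ᵐ[P] fun ω => if 0 < γ ω then p else 0)
    {f : ℕ → ℝ} (hf : Integrable (fun ω => f (γ ω)) P)
    (hfX : Integrable (fun ω => f (γ ω) * X ω) P) :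
    ∫ ω, f (γ ω) * (X ω - p * P.real {ω | 0 < γ ω}) ∂P
      = p * (P.real {ω | γ ω = 0} * ∫ ω in {ω | 0 < γ ω}, f (γ ω) ∂P
        - P.real {ω | 0 < γ ω} * ∫ ω in {ω | γ ω = 0}, f (γ ω) ∂P) := by
  have hA : MeasurableSet {ω | 0 < γ ω} := measurableSet_lt measurable_const hγ
  simp_rw [mul_sub]
  rw [integral_sub hfX (hf.mul_const _), integral_comp_mul_eq_mul_setIntegral hγ hX hXγ f hfX,
    integral_mul_const, setOf_eq_zero_eq_compl_setOf_pos, probReal_compl_eq_one_sub hA,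
    ← integral_add_compl hA hf]
  ring

theorem integral_sq_eq_of_condExp_comap_eq (hγ : Measurable γ) {a b : ℝ}
    (hXγ : P[fun ω => X ω ^ 2 | MeasurableSpace.comap γ inferInstance]
      =ᵐ[P] fun ω => if 0 < γ ω then a + b / (γ ω : ℝ) else 0)
    (hγinv : Integrable (fun ω => if 0 < γ ω then ((γ ω : ℝ))⁻¹ else 0) P) :
    ∫ ω, X ω ^ 2 ∂P
      = a * P.real {ω | 0 < γ ω} + b * ∫ ω in {ω | 0 < γ ω}, ((γ ω : ℝ))⁻¹ ∂P := by
  have hA : MeasurableSet {ω | 0 < γ ω} := measurableSet_lt measurable_const hγ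
  have hite : ∀ g : Ω → ℝ, (fun ω => if 0 < γ ω then g ω else 0) = {ω | 0 < γ ω}.indicator g :=
    fun g => funext fun ω => by by_cases h : 0 < γ ω <;> simp [h]
  rw [hite] at hγinv
  rw [← integral_condExp hγ.comap_le, integral_congr_ae hXγ, hite, integral_indicator hA]
  simp_rw [div_eq_mul_inv]
  rw [integral_add (integrable_const a).integrableOn
      (((integrable_indicator_iff hA).1 hγinv).const_mul b), setIntegral_const, smul_eq_mul,
    mul_comm, integral_const_mul]
theorem integral_partiallyLinear_mul_sub_eq {D ε Y : Ω → ℝ} {T : Ω → ℕ} {θ μ lam : ℕ → ℝ}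
    (hγ : Measurable γ) (hT : Measurable T) (hTγ : ∀ ω, T ω ≤ γ ω)
    (hX : ∀ ω, X ω = imputedShare (γ ω) (T ω))
    (hXγ : P[X | MeasurableSpace.comap γ inferInstance] =ᵐ[P] fun ω => if 0 < γ ω then p else 0)
    (hD : Measurable D) (hD01 : ∀ ω, D ω = 0 ∨ D ω = 1) (hDmean : ∫ ω, D ω ∂P = p)
    (hDγT : D ⟂ᵢ[P] fun ω => (γ ω, T ω))
    (hY : ∀ ω, Y ω = θ (γ ω) + μ (γ ω) * D ω + lam (γ ω) * (T ω : ℝ) + ε ω)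
    (hθ : Integrable (fun ω => θ (γ ω)) P) (hμ : Integrable (fun ω => μ (γ ω)) P)
    (hlamT : Integrable (fun ω => lam (γ ω) * (T ω : ℝ)) P) (hε : Integrable ε P)
    (hεmean : ∫ ω, ε ω ∂P = 0) (hεX : ∫ ω, ε ω * X ω ∂P = 0) :
    ∫ ω, Y ω * (X ω - p * P.real {ω | 0 < γ ω}) ∂P
      = p * (P.real {ω | γ ω = 0} * ∫ ω in {ω | 0 < γ ω}, θ (γ ω) ∂P
          - P.real {ω | 0 < γ ω} * ∫ ω in {ω | γ ω = 0}, θ (γ ω) ∂P)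
        + p * (p * (P.real {ω | γ ω = 0} * ∫ ω in {ω | 0 < γ ω}, μ (γ ω) ∂P
          - P.real {ω | 0 < γ ω} * ∫ ω in {ω | γ ω = 0}, μ (γ ω) ∂P))
        + ∫ ω in {ω | 0 < γ ω},
            lam (γ ω) * (γ ω : ℝ) * X ω * (X ω - p * P.real {ω | 0 < γ ω}) ∂P := by
  set m := p * P.real {ω | 0 < γ ω}
  have hXbdd : MemLp X ∞ P := memLp_top_of_eq_imputedShare hγ hT hTγ hX
  have hXint : Integrable X P := hXbdd.integrable le_top
  have hcen : ∀ {g : Ω → ℝ}, Integrable g P → Integrable (fun ω => g ω * (X ω - m)) P :=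
    fun hg => hg.mul_of_top_left (hXbdd.sub (memLp_const m))
  have hμD : Integrable (fun ω => μ (γ ω) * D ω) P :=
    hμ.mul_bdd hD.aestronglyMeasurable (c := 1)
      (.of_forall fun ω => by rcases hD01 ω with h | h <;> simp [h])
  have hμDX : ∫ ω, μ (γ ω) * D ω * (X ω - m) ∂P = p * ∫ ω, μ (γ ω) * (X ω - m) ∂P := by
    have h := integral_mul_comp_eq_of_indepFun hDγT hD (hγ.prodMk hT)
      fun q => μ q.1 * (imputedShare q.1 q.2 - m)
    simp only [← hX, hDmean] at h
    rw [← h]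
    congr with ω
    ring
  have hεX' : ∫ ω, ε ω * (X ω - m) ∂P = 0 := by
    rw [integral_mul_sub_const hε (hε.mul_of_top_left hXbdd), hεX, hεmean, mul_zero, sub_zero]
  have hsplit : (fun ω => Y ω * (X ω - m)) = fun ω => θ (γ ω) * (X ω - m)
      + μ (γ ω) * D ω * (X ω - m) + lam (γ ω) * (T ω : ℝ) * (X ω - m) + ε ω * (X ω - m) :=
    funext fun ω => by rw [hY]; ring
  rw [hsplit, integral_add (((hcen hθ).fun_add (hcen hμD)).fun_add (hcen hlamT)) (hcen hε),
    integral_add ((hcen hθ).fun_add (hcen hμD)) (hcen hlamT),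
    integral_add (hcen hθ) (hcen hμD), hμDX,
    integral_comp_mul_sub_eq hγ hXint hXγ hθ (hθ.mul_of_top_left hXbdd),
    integral_comp_mul_sub_eq hγ hXint hXγ hμ (hμ.mul_of_top_left hXbdd),
    integral_mul_natCast_mul_sub_eq_setIntegral hTγ hX, hεX', add_zero]

end

theorem stmt14_general
    {Ω : Type*} [MeasurableSpace Ω] (P : Measure Ω) [IsProbabilityMeasure P]
    (p : ℝ) (hp0 : 0 < p)
    (D : Ω → ℝ) (hDmeas : Measurable D) (hD01 : ∀ ω, D ω = 0 ∨ D ω = 1)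
    (hDp : P {ω | D ω = 1} = ENNReal.ofReal p)
    (γ T : Ω → ℕ) (hγmeas : Measurable γ) (hTmeas : Measurable T)
    (hTγ : ∀ ω, T ω ≤ γ ω)
    (Dstar : Ω → ℝ)
    (hDstar : ∀ ω, Dstar ω = if 0 < γ ω then (T ω : ℝ) / (γ ω : ℝ) else 0)
    (hpγ0 : 0 < (P {ω | 0 < γ ω}).toReal) (hpγ1 : (P {ω | 0 < γ ω}).toReal < 1)
    (hindep : IndepFun D (fun ω => (γ ω, T ω)) P)
    (hcondmean : P[Dstar | MeasurableSpace.comap γ inferInstance]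
      =ᵐ[P] fun ω => if 0 < γ ω then p else 0)
    (hcondsq : P[fun ω => Dstar ω ^ 2 | MeasurableSpace.comap γ inferInstance]
      =ᵐ[P] fun ω => if 0 < γ ω then p ^ 2 + p * (1 - p) / (γ ω : ℝ) else 0)
    (hinvγint : Integrable (fun ω => if 0 < γ ω then ((γ ω : ℝ))⁻¹ else 0) P)
    (θ00 μde lamse : ℕ → ℝ) (ε : Ω → ℝ) (Y : Ω → ℝ)
    (hY : ∀ ω, Y ω = θ00 (γ ω) + μde (γ ω) * D ω + lamse (γ ω) * (T ω : ℝ) + ε ω)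
    (hθint : Integrable (fun ω => θ00 (γ ω)) P)
    (hμint : Integrable (fun ω => μde (γ ω)) P)
    (hlamTint : Integrable (fun ω => lamse (γ ω) * (T ω : ℝ)) P)
    (hεint : Integrable ε P) (hYint : Integrable Y P)
    (hε : ∫ ω, ε ω ∂P = 0)
    (hεDstar : ∫ ω, ε ω * Dstar ω ∂P = 0)
    (hYDint : Integrable (fun ω => Y ω * Dstar ω) P)
    (hDsqint : Integrable (fun ω => Dstar ω ^ 2) P) :
    ((∫ ω, Y ω * Dstar ω ∂P) - (∫ ω, Y ω ∂P) * (∫ ω, Dstar ω ∂P)) /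
        ((∫ ω, Dstar ω ^ 2 ∂P) - (∫ ω, Dstar ω ∂P) ^ 2)
      = ((((P {ω | 0 < γ ω}).toReal⁻¹ * (∫ ω in {ω | 0 < γ ω}, θ00 (γ ω) ∂P)
            - (P {ω | γ ω = 0}).toReal⁻¹ * (∫ ω in {ω | γ ω = 0}, θ00 (γ ω) ∂P))
          + p * ((P {ω | 0 < γ ω}).toReal⁻¹ * (∫ ω in {ω | 0 < γ ω}, μde (γ ω) ∂P)
            - (P {ω | γ ω = 0}).toReal⁻¹ * (∫ ω in {ω | γ ω = 0}, μde (γ ω) ∂P)))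
          * (1 - (P {ω | 0 < γ ω}).toReal)
          / (p * (1 - (P {ω | 0 < γ ω}).toReal)
            + (1 - p) * ((P {ω | 0 < γ ω}).toReal⁻¹ *
                (∫ ω in {ω | 0 < γ ω}, ((γ ω : ℝ))⁻¹ ∂P))))
        + ((P {ω | 0 < γ ω}).toReal⁻¹ *
            (∫ ω in {ω | 0 < γ ω}, lamse (γ ω) * (γ ω : ℝ) * Dstar ω *
              (Dstar ω - p * (P {ω' | 0 < γ ω'}).toReal) ∂P)) /
          ((P {ω | 0 < γ ω}).toReal⁻¹ *
            (∫ ω in {ω | 0 < γ ω}, Dstar ω *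
              (Dstar ω - p * (P {ω' | 0 < γ ω'}).toReal) ∂P)) := by
  have hDstar_share : ∀ ω, Dstar ω = imputedShare (γ ω) (T ω) := hDstar
  have hDstar_int : Integrable Dstar P :=
    (memLp_top_of_eq_imputedShare hγmeas hTmeas hTγ hDstar_share).integrable le_top
  have hED : ∫ ω, D ω ∂P = p := by
    rw [integral_eq_measureReal_of_forall_eq_zero_or_eq_one hDmeas hD01, measureReal_def, hDp,
      ENNReal.toReal_ofReal hp0.le]
  simp only [← measureReal_def]
  set pγ := P.real {ω | 0 < γ ω}
  have hEDs : ∫ ω, Dstar ω ∂P = p * pγ :=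
    integral_eq_mul_measureReal_of_condExp_comap_eq hγmeas hDstar_int hcondmean
  have hcov : ∫ ω, Y ω * Dstar ω ∂P - (∫ ω, Y ω ∂P) * ∫ ω, Dstar ω ∂P
      = ∫ ω, Y ω * (Dstar ω - p * pγ) ∂P := by
    rw [hEDs, integral_mul_sub_const hYint hYDint, mul_comm]
  have hvar : ∫ ω in {ω | 0 < γ ω}, Dstar ω * (Dstar ω - p * pγ) ∂P
      = ∫ ω, Dstar ω ^ 2 ∂P - (p * pγ) ^ 2 :=
    setIntegral_mul_sub_eq_integral_sq_sub hDstar_int hDsqint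
      (fun ω hω => by rw [hDstar ω, if_neg (show ¬0 < γ ω from hω)]) hEDs
  rw [hcov, integral_partiallyLinear_mul_sub_eq hγmeas hTmeas hTγ hDstar_share hcondmean hDmeas hD01
      hED hindep hY hθint hμint hlamTint hεint hε hεDstar, hEDs, hvar,
    integral_sq_eq_of_condExp_comap_eq hγmeas hcondsq hinvγint, setOf_eq_zero_eq_compl_setOf_pos,
    probReal_compl_eq_one_sub (measurableSet_lt measurable_const hγmeas)]
  exact spillover_ratio_eq p pγ _ _ _ _ _ _ hp0.ne' hpγ0.ne' (sub_ne_zero.2 hpγ1.ne')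

/-- Theorem 4: Decomposition of the `D̄*`-regression spillover
coefficient: `Cov(Y, D̄*)/Var(D̄*) = bias + E[λˢᵉ(γ)·γ·D̄*·(D̄* − p·p_γ) | γ > 0] /
E[D̄*·(D̄* − p·p_γ) | γ > 0]`, where
`bias = (Δθ⁰⁰ + p·Δμᵈᵉ)(1 − p_γ) / (p(1 − p_γ) + (1 − p)·E[1/γ | γ > 0])`. -/
theorem stmt14
    {Ω : Type*} [MeasurableSpace Ω] (P : Measure Ω) [IsProbabilityMeasure P]
    (p : ℝ) (hp0 : 0 < p) (hp1 : p < 1)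
    (D : Ω → ℝ) (hDmeas : Measurable D) (hD01 : ∀ ω, D ω = 0 ∨ D ω = 1)
    (hDp : P {ω | D ω = 1} = ENNReal.ofReal p)
    (γ T : Ω → ℕ) (hγmeas : Measurable γ) (hTmeas : Measurable T)
    (hTγ : ∀ ω, T ω ≤ γ ω)
    (Dstar : Ω → ℝ)
    (hDstar : ∀ ω, Dstar ω = if 0 < γ ω then (T ω : ℝ) / (γ ω : ℝ) else 0)
    (hpγ0 : 0 < (P {ω | 0 < γ ω}).toReal) (hpγ1 : (P {ω | 0 < γ ω}).toReal < 1)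
    (hindep : IndepFun D (fun ω => (γ ω, T ω)) P)
    (hcondmean : P[Dstar | MeasurableSpace.comap γ inferInstance]
      =ᵐ[P] fun ω => if 0 < γ ω then p else 0)
    (hcondsq : P[fun ω => Dstar ω ^ 2 | MeasurableSpace.comap γ inferInstance]
      =ᵐ[P] fun ω => if 0 < γ ω then p ^ 2 + p * (1 - p) / (γ ω : ℝ) else 0)
    (hinvγint : Integrable (fun ω => if 0 < γ ω then ((γ ω : ℝ))⁻¹ else 0) P)
    (θ00 μde lamse : ℕ → ℝ) (ε : Ω → ℝ) (Y : Ω → ℝ)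
    (hY : ∀ ω, Y ω = θ00 (γ ω) + μde (γ ω) * D ω + lamse (γ ω) * (T ω : ℝ) + ε ω)
    (hθint : Integrable (fun ω => θ00 (γ ω)) P)
    (hμint : Integrable (fun ω => μde (γ ω)) P)
    (hlamTint : Integrable (fun ω => lamse (γ ω) * (T ω : ℝ)) P)
    (hεint : Integrable ε P) (hYint : Integrable Y P)
    (hε : ∫ ω, ε ω ∂P = 0)
    (hεDstar : ∫ ω, ε ω * Dstar ω ∂P = 0)
    (hθDint : Integrable (fun ω => θ00 (γ ω) * Dstar ω) P)
    (hμDDint : Integrable (fun ω => μde (γ ω) * D ω * Dstar ω) P)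
    (hYDint : Integrable (fun ω => Y ω * Dstar ω) P)
    (hDsqint : Integrable (fun ω => Dstar ω ^ 2) P)
    (hlamint : Integrable (fun ω => lamse (γ ω) * (γ ω : ℝ) * Dstar ω *
      (Dstar ω - p * (P {ω' | 0 < γ ω'}).toReal)) P)
    (hden : ∫ ω in {ω | 0 < γ ω}, Dstar ω *
      (Dstar ω - p * (P {ω' | 0 < γ ω'}).toReal) ∂P ≠ 0) :
    ((∫ ω, Y ω * Dstar ω ∂P) - (∫ ω, Y ω ∂P) * (∫ ω, Dstar ω ∂P)) /
        ((∫ ω, Dstar ω ^ 2 ∂P) - (∫ ω, Dstar ω ∂P) ^ 2)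
      = ((((P {ω | 0 < γ ω}).toReal⁻¹ * (∫ ω in {ω | 0 < γ ω}, θ00 (γ ω) ∂P)
            - (P {ω | γ ω = 0}).toReal⁻¹ * (∫ ω in {ω | γ ω = 0}, θ00 (γ ω) ∂P))
          + p * ((P {ω | 0 < γ ω}).toReal⁻¹ * (∫ ω in {ω | 0 < γ ω}, μde (γ ω) ∂P)
            - (P {ω | γ ω = 0}).toReal⁻¹ * (∫ ω in {ω | γ ω = 0}, μde (γ ω) ∂P)))
          * (1 - (P {ω | 0 < γ ω}).toReal)
          / (p * (1 - (P {ω | 0 < γ ω}).toReal)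
            + (1 - p) * ((P {ω | 0 < γ ω}).toReal⁻¹ *
                (∫ ω in {ω | 0 < γ ω}, ((γ ω : ℝ))⁻¹ ∂P))))
        + ((P {ω | 0 < γ ω}).toReal⁻¹ *
            (∫ ω in {ω | 0 < γ ω}, lamse (γ ω) * (γ ω : ℝ) * Dstar ω *
              (Dstar ω - p * (P {ω' | 0 < γ ω'}).toReal) ∂P)) /
          ((P {ω | 0 < γ ω}).toReal⁻¹ *
            (∫ ω in {ω | 0 < γ ω}, Dstar ω *
              (Dstar ω - p * (P {ω' | 0 < γ ω'}).toReal) ∂P)) :=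
  stmt14_general P p hp0 D hDmeas hD01 hDp γ T hγmeas hTmeas hTγ Dstar hDstar hpγ0 hpγ1 hindep
    hcondmean hcondsq hinvγint θ00 μde lamse ε Y hY hθint hμint hlamTint hεint hYint hε hεDstar
    hYDint hDsqint
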